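/- arXiv:1810.08152 — 4 statements merged into one kernel-verified Lean document; each statement's English description precedes it below -/
import Mathlib

section
/- Let E ∈ ℝ_{≥0}^{r×d} be a cone generator matrix for S, i.e. ker(S) ∩ ℝ_{≥0}^r = {Eλ : λ ∈ ℝ_{≥0}^d}. Then the positive steady state variety V⁺ is nonempty if and only if E has no zero row. -/
open Matrix

noncomputable section

/-- The monomial map φ: `phi Y x j = ∏ i, x i ^ Y i j`. -/
def phi {n r : ℕ} (Y : Matrix (Fin n) (Fin r) ℕ) (x : Fin n → ℝ) : Fin r → ℝ :=
  fun j => ∏ i, x i ^ Y i j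

/-- The positive steady state variety V⁺. -/
def Vplus {n r : ℕ} (Y : Matrix (Fin n) (Fin r) ℕ) (S : Matrix (Fin n) (Fin r) ℝ) :
    Set ((Fin r → ℝ) × (Fin n → ℝ)) :=
  {p | (∀ j, 0 < p.1 j) ∧ (∀ i, 0 < p.2 i) ∧
    S.mulVec (fun j => p.1 j * phi Y p.2 j) = 0}

/-- `E` is a cone generator matrix for `S`:
`E` is nonnegative and `ker S ∩ ℝ_{≥0}^r = {Eλ : λ ≥ 0}`. -/
def IsConeGenMatrix {n r d : ℕ} (S : Matrix (Fin n) (Fin r) ℝ)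
    (E : Matrix (Fin r) (Fin d) ℝ) : Prop :=
  (∀ j l, 0 ≤ E j l) ∧
  {v : Fin r → ℝ | S.mulVec v = 0 ∧ ∀ j, 0 ≤ v j} =
    {v : Fin r → ℝ | ∃ lam : Fin d → ℝ, (∀ l, 0 ≤ lam l) ∧ v = E.mulVec lam}

/-- The coefficient cone Λ(E). -/
def Lambda {r d : ℕ} (E : Matrix (Fin r) (Fin d) ℝ) : Set (Fin d → ℝ) :=
  {lam | (∀ l, 0 ≤ lam l) ∧ ∀ j, 0 < E.mulVec lam j}

/-- `ξ^B`: for a rational `q × m` matrix `B`, `(ξ^B) j = ∏ i, ξ i ^ (B i j)` (real powers). -/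
def vecPow {q m : ℕ} (ξ : Fin q → ℝ) (B : Matrix (Fin q) (Fin m) ℚ) : Fin m → ℝ :=
  fun j => ∏ i, ξ i ^ ((B i j : ℝ))

/-- V⁺ admits a monomial parametrization with exponent matrix `A` (data `p`, `A`, `K`, `ψ`). -/
def IsMonomialParamExp {n r : ℕ} (Y : Matrix (Fin n) (Fin r) ℕ)
    (S : Matrix (Fin n) (Fin r) ℝ) (p : ℕ) (A : Matrix (Fin (n - p)) (Fin n) ℚ)
    (K : Set (Fin r → ℝ)) (ψ : (Fin r → ℝ) → (Fin n → ℝ)) : Prop :=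
  p < n ∧ A.rank = n - p ∧ (∀ k ∈ K, ∀ j, 0 < k j) ∧ (∀ k ∈ K, ∀ i, 0 < ψ k i) ∧
  ∀ k x, (∀ j : Fin r, 0 < k j) → (∀ i : Fin n, 0 < x i) →
    ((k, x) ∈ Vplus Y S ↔ k ∈ K ∧
      ∃ ξ : Fin (n - p) → ℝ, (∀ l, 0 < ξ l) ∧ x = fun i => ψ k i * vecPow ξ A i)

/-- `Z` is a conservation matrix for `S` (with `s = rank S`):
its rows form a basis of the left kernel of `S`. -/
def IsConservationMatrix {n r : ℕ} (S : Matrix (Fin n) (Fin r) ℝ) (s : ℕ)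
    (Z : Matrix (Fin (n - s)) (Fin n) ℝ) : Prop :=
  S.rank = s ∧ s < n ∧ LinearIndependent ℝ (fun i => Z i) ∧
    Submodule.span ℝ (Set.range (fun i => Z i)) = LinearMap.ker S.vecMulLinear

/-- `im₊(Z) = {Zx : x ≥ 0}`. -/
def imPos {m n : ℕ} (Z : Matrix (Fin m) (Fin n) ℝ) : Set (Fin m → ℝ) :=
  {c | ∃ x : Fin n → ℝ, (∀ i, 0 ≤ x i) ∧ c = Z.mulVec x}

/-- The real row space of a rational matrix. -/
def rowSpace {q m : ℕ} (A : Matrix (Fin q) (Fin m) ℚ) : Submodule ℝ (Fin m → ℝ) :=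
  Submodule.span ℝ (Set.range (fun l => fun i => ((A l i : ℝ))))

/-- The column space (image) of `S`. -/
def colSpace {n r : ℕ} (S : Matrix (Fin n) (Fin r) ℝ) : Submodule ℝ (Fin n → ℝ) :=
  LinearMap.range S.mulVecLin

/-- Componentwise sign of a vector. -/
def signVec {m : ℕ} (v : Fin m → ℝ) : Fin m → ℝ := fun i => Real.sign (v i)

/-! Both conditions are equivalent to `ker S` containing a positive vector: for `(k, x) ∈ V⁺`
the flux `k ⋆ φ(x)` is one, and a positive `v ∈ ker S` gives `(v, 1) ∈ V⁺` since `φ(1) = 1`.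
A positive vector `Eλ` rules out a zero row of `E`, while if no row vanishes then, `E` being
nonnegative, `E 1` is positive. -/

lemma phi_pos {n r : ℕ} (Y : Matrix (Fin n) (Fin r) ℕ) {x : Fin n → ℝ} (hx : ∀ i, 0 < x i)
    (j : Fin r) : 0 < phi Y x j :=
  Finset.prod_pos fun i _ => pow_pos (hx i) _

@[simp]
lemma phi_one {n r : ℕ} (Y : Matrix (Fin n) (Fin r) ℕ) : phi Y (fun _ => 1) = fun _ => 1 := by
  ext j
  simp [phi]

lemma Vplus_nonempty_iff_exists_pos_mem_ker {n r : ℕ} (Y : Matrix (Fin n) (Fin r) ℕ)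
    (S : Matrix (Fin n) (Fin r) ℝ) :
    (Vplus Y S).Nonempty ↔ ∃ v : Fin r → ℝ, S *ᵥ v = 0 ∧ ∀ j, 0 < v j := by
  constructor
  · rintro ⟨⟨k, x⟩, hk, hx, hS⟩
    exact ⟨_, hS, fun j => mul_pos (hk j) (phi_pos Y hx j)⟩
  · rintro ⟨v, hS, hv⟩
    refine ⟨(v, fun _ => 1), hv, fun _ => one_pos, ?_⟩
    simpa using hS

lemma mulVec_one_pos_of_nonneg {m n : Type*} [Fintype n] {E : Matrix m n ℝ}
    (hE : ∀ j l, 0 ≤ E j l) (hrow : ∀ j, ∃ l, E j l ≠ 0) (j : m) :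
    0 < (E *ᵥ fun _ => 1) j := by
  obtain ⟨l, hl⟩ := hrow j
  simp only [mulVec, dotProduct, mul_one]
  exact Finset.sum_pos' (fun l _ => hE j l) ⟨l, Finset.mem_univ l, (hE j l).lt_of_ne' hl⟩

lemma IsConeGenMatrix.exists_pos_mem_ker_iff {n r d : ℕ} {S : Matrix (Fin n) (Fin r) ℝ}
    {E : Matrix (Fin r) (Fin d) ℝ} (hE : IsConeGenMatrix S E) :
    (∃ v : Fin r → ℝ, S *ᵥ v = 0 ∧ ∀ j, 0 < v j) ↔ ∀ j, ∃ l, E j l ≠ 0 := by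
  obtain ⟨hEnn, hcone⟩ := hE
  constructor
  · rintro ⟨v, hS, hv⟩ j
    have hv_mem : v ∈ {v : Fin r → ℝ | S *ᵥ v = 0 ∧ ∀ j, 0 ≤ v j} := ⟨hS, fun j => (hv j).le⟩
    rw [hcone] at hv_mem
    obtain ⟨lam, -, rfl⟩ := hv_mem
    by_contra! hrow
    have hzero : E j = 0 := funext hrow
    simpa [mulVec, hzero] using hv j
  · intro hrow
    have hmem : E *ᵥ (fun _ => 1) ∈ {v : Fin r → ℝ | S *ᵥ v = 0 ∧ ∀ j, 0 ≤ v j} := by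
      rw [hcone]
      exact ⟨_, fun _ => zero_le_one, rfl⟩
    exact ⟨_, hmem.1, mulVec_one_pos_of_nonneg hEnn hrow⟩

theorem Vplus_nonempty_iff_no_zero_row_general {n r d : ℕ}
    (Y : Matrix (Fin n) (Fin r) ℕ) (S : Matrix (Fin n) (Fin r) ℝ)
    (E : Matrix (Fin r) (Fin d) ℝ) (hE : IsConeGenMatrix S E) :
    (Vplus Y S).Nonempty ↔ ∀ j, ∃ l, E j l ≠ 0 :=
  (Vplus_nonempty_iff_exists_pos_mem_ker Y S).trans hE.exists_pos_mem_ker_iff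

/-- V⁺ is nonempty iff the cone generator matrix E has no zero row. -/
theorem Vplus_nonempty_iff_no_zero_row {n r d : ℕ} (hn : 1 ≤ n) (hr : 1 ≤ r)
    (Y : Matrix (Fin n) (Fin r) ℕ) (S : Matrix (Fin n) (Fin r) ℝ)
    (E : Matrix (Fin r) (Fin d) ℝ) (hE : IsConeGenMatrix S E) :
    (Vplus Y S).Nonempty ↔ ∀ j, ∃ l, E j l ≠ 0 :=
  Vplus_nonempty_iff_no_zero_row_general Y S E hE
end
end

section
/- Assume V⁺ admits a monomial parametrization (with data M ∈ ℤ^{n×d}, K ⊆ ℝ_{>0}^r, γ : K → ℝ^d). Let q < n and let A ∈ ℚ^{q×n} be a matrix of maximal rank q with AM = 0. Then for every (k,x) ∈ ℝ_{>0}^r × ℝ_{>0}^n: (i) for every ξ ∈ ℝ_{>0}^q, (k,x) ∈ V⁺ if and only if (k, x⋆ξ^A) ∈ V⁺; and (ii) for every κ ∈ ℝ^q, (k,x) ∈ V⁺ if and only if (k, x⋆(e^κ)^A) ∈ V⁺, where e^κ is taken componentwise. -/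
open Matrix

noncomputable section

/-- V⁺ admits a monomial parametrization (data `M`, `K`, `γ`), with `p = rank M < n`. -/
def IsMonomialParamM {n r d : ℕ} (Y : Matrix (Fin n) (Fin r) ℕ)
    (S : Matrix (Fin n) (Fin r) ℝ) (M : Matrix (Fin n) (Fin d) ℤ) (p : ℕ)
    (K : Set (Fin r → ℝ)) (γ : (Fin r → ℝ) → Fin d → ℝ) : Prop :=
  p < n ∧ (M.map (Int.cast : ℤ → ℚ)).rank = p ∧ (∀ k ∈ K, ∀ j, 0 < k j) ∧
  ∀ k x, (∀ j : Fin r, 0 < k j) → (∀ i : Fin n, 0 < x i) →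
    ((k, x) ∈ Vplus Y S ↔ k ∈ K ∧ ∀ j, (∏ i, x i ^ M i j) = γ k j)

/-
Monomials compose as `(ξ^A)^M = ξ^(A M)`, so `A M = 0` gives `(x ⋆ ξ^A)^M = x^M`.
Since membership in the fibre of V⁺ over `k` is decided by `x^M` alone, it is unchanged by the scaling; `e^κ` is one particular positive `ξ`.
-/

lemma vecPow_pos {q m : ℕ} {ξ : Fin q → ℝ} (hξ : ∀ l, 0 < ξ l)
    (B : Matrix (Fin q) (Fin m) ℚ) (j : Fin m) : 0 < vecPow ξ B j :=
  Finset.prod_pos fun i _ => Real.rpow_pos_of_pos (hξ i) _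

lemma vecPow_rpow {q m : ℕ} {ξ : Fin q → ℝ} (hξ : ∀ l, 0 < ξ l)
    (B : Matrix (Fin q) (Fin m) ℚ) (j : Fin m) (c : ℝ) :
    vecPow ξ B j ^ c = ∏ l, ξ l ^ ((B l j : ℝ) * c) := by
  rw [vecPow, ← Real.finsetProd_rpow _ _ fun l _ => (Real.rpow_pos_of_pos (hξ l) _).le]
  exact Finset.prod_congr rfl fun l _ => (Real.rpow_mul (hξ l).le _ _).symm

lemma prod_vecPow_zpow {q n d : ℕ} {ξ : Fin q → ℝ} (hξ : ∀ l, 0 < ξ l)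
    (A : Matrix (Fin q) (Fin n) ℚ) (N : Matrix (Fin n) (Fin d) ℤ) (j : Fin d) :
    ∏ i, vecPow ξ A i ^ N i j = vecPow ξ (A * N.map (Int.cast : ℤ → ℚ)) j := by
  simp_rw [← Real.rpow_intCast, vecPow_rpow hξ]
  rw [Finset.prod_comm]
  refine Finset.prod_congr rfl fun l _ => ?_
  rw [← Real.rpow_sum_of_pos (hξ l), Matrix.mul_apply]
  push_cast [Matrix.map_apply]
  rfl

lemma vecPow_zero {q m : ℕ} (ξ : Fin q → ℝ) (j : Fin m) :
    vecPow ξ (0 : Matrix (Fin q) (Fin m) ℚ) j = 1 := by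
  simp [vecPow]

lemma prod_mul_vecPow_zpow_of_mul_eq_zero {q n d : ℕ} (x : Fin n → ℝ) {ξ : Fin q → ℝ}
    (hξ : ∀ l, 0 < ξ l) {A : Matrix (Fin q) (Fin n) ℚ} {N : Matrix (Fin n) (Fin d) ℤ}
    (hAN : A * N.map (Int.cast : ℤ → ℚ) = 0) (j : Fin d) :
    ∏ i, (x i * vecPow ξ A i) ^ N i j = ∏ i, x i ^ N i j := by
  simp_rw [mul_zpow, Finset.prod_mul_distrib, prod_vecPow_zpow hξ, hAN, vecPow_zero, mul_one]

theorem mem_Vplus_iff_hadamard_vecPow_general {n r d q : ℕ}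
    (Y : Matrix (Fin n) (Fin r) ℕ) (S : Matrix (Fin n) (Fin r) ℝ)
    (M : Matrix (Fin n) (Fin d) ℤ) (p : ℕ) (K : Set (Fin r → ℝ))
    (γ : (Fin r → ℝ) → Fin d → ℝ) (hparam : IsMonomialParamM Y S M p K γ)
    (A : Matrix (Fin q) (Fin n) ℚ)
    (hAM : A * (M.map (Int.cast : ℤ → ℚ)) = 0) :
    ∀ k x, (∀ j : Fin r, 0 < k j) → (∀ i : Fin n, 0 < x i) →
      (∀ ξ : Fin q → ℝ, (∀ l, 0 < ξ l) →
        ((k, x) ∈ Vplus Y S ↔ (k, fun i => x i * vecPow ξ A i) ∈ Vplus Y S)) ∧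
      (∀ κ : Fin q → ℝ,
        ((k, x) ∈ Vplus Y S ↔
          (k, fun i => x i * vecPow (fun l => Real.exp (κ l)) A i) ∈ Vplus Y S)) := by
  obtain ⟨-, -, -, hiff⟩ := hparam
  intro k x hk hx
  have scaling_invariant : ∀ ξ : Fin q → ℝ, (∀ l, 0 < ξ l) →
      ((k, x) ∈ Vplus Y S ↔ (k, fun i => x i * vecPow ξ A i) ∈ Vplus Y S) := by
    intro ξ hξ
    rw [hiff k x hk hx, hiff k _ hk fun i => mul_pos (hx i) (vecPow_pos hξ A i)]
    simp_rw [prod_mul_vecPow_zpow_of_mul_eq_zero x hξ hAM]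
  exact ⟨scaling_invariant, fun κ => scaling_invariant _ fun l => Real.exp_pos _⟩

/-- if AM = 0 with A of maximal rank q < n, then the fibers of V⁺ over k are
invariant under scaling by ξ^A (equivalently (e^κ)^A). -/
theorem mem_Vplus_iff_hadamard_vecPow {n r d q : ℕ} (hn : 1 ≤ n) (hr : 1 ≤ r)
    (Y : Matrix (Fin n) (Fin r) ℕ) (S : Matrix (Fin n) (Fin r) ℝ)
    (M : Matrix (Fin n) (Fin d) ℤ) (p : ℕ) (K : Set (Fin r → ℝ))
    (γ : (Fin r → ℝ) → Fin d → ℝ) (hparam : IsMonomialParamM Y S M p K γ)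
    (hq : q < n) (A : Matrix (Fin q) (Fin n) ℚ) (hA : A.rank = q)
    (hAM : A * (M.map (Int.cast : ℤ → ℚ)) = 0) :
    ∀ k x, (∀ j : Fin r, 0 < k j) → (∀ i : Fin n, 0 < x i) →
      (∀ ξ : Fin q → ℝ, (∀ l, 0 < ξ l) →
        ((k, x) ∈ Vplus Y S ↔ (k, fun i => x i * vecPow ξ A i) ∈ Vplus Y S)) ∧
      (∀ κ : Fin q → ℝ,
        ((k, x) ∈ Vplus Y S ↔
          (k, fun i => x i * vecPow (fun l => Real.exp (κ l)) A i) ∈ Vplus Y S)) :=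
  mem_Vplus_iff_hadamard_vecPow_general Y S M p K γ hparam A hAM
end
end

section
/- Assume V⁺ admits a monomial parametrization whose matrix M ∈ ℤ^{n×p} has full column rank p < n, with domain K ⊆ ℝ_{>0}^r and γ : K → ℝ_{>0}^p, and assume each coordinate γ_i is a rational function of k, i.e. there are real polynomials p_i, q_i in r variables with q_i(k) ≠ 0 and γ_i(k) = p_i(k)/q_i(k) for all k ∈ K. Then there exist a matrix A ∈ ℚ^{(n−p)×n} of rank n−p with AM = 0, a map ψ : K → ℝ_{>0}^n, and a positive integer η such that each coordinate function k ↦ ψ(k)_i^η is a rational function on K (a quotient of real polynomials whose denominator does not vanish on K), and such that for all (k,x) ∈ ℝ_{>0}^r × ℝ_{>0}^n: (k,x) ∈ V⁺ if and only if k ∈ K and there exists ξ ∈ ℝ_{>0}^{n−p} with x = ψ(k)⋆ξ^A. -/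
open Matrix

noncomputable section

/-- `g` is a rational function on `K`: a quotient of real polynomials whose denominator
does not vanish on `K`. -/
def IsRationalOn {r : ℕ} (K : Set (Fin r → ℝ)) (g : (Fin r → ℝ) → ℝ) : Prop :=
  ∃ P Q : MvPolynomial (Fin r) ℝ, ∀ k ∈ K,
    MvPolynomial.eval k Q ≠ 0 ∧ g k = MvPolynomial.eval k P / MvPolynomial.eval k Q

section Helpers
variable {r : ℕ} {K : Set (Fin r → ℝ)}


lemma isRationalOn_congr {f g : (Fin r → ℝ) → ℝ} (h : ∀ k ∈ K, f k = g k)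
    (hf : IsRationalOn K f) : IsRationalOn K g := by
  obtain ⟨P, Q, hPQ⟩ := hf
  exact ⟨P, Q, fun k hk => ⟨(hPQ k hk).1, (h k hk) ▸ (hPQ k hk).2⟩⟩

lemma isRationalOn_mul {f g : (Fin r → ℝ) → ℝ} (hf : IsRationalOn K f)
    (hg : IsRationalOn K g) : IsRationalOn K (fun k => f k * g k) := by
  obtain ⟨P1, Q1, h1⟩ := hf
  obtain ⟨P2, Q2, h2⟩ := hg
  refine ⟨P1 * P2, Q1 * Q2, fun k hk => ?_⟩
  obtain ⟨hq1, he1⟩ := h1 k hk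
  obtain ⟨hq2, he2⟩ := h2 k hk
  simp only [_root_.map_mul]
  exact ⟨mul_ne_zero hq1 hq2, by rw [he1, he2, div_mul_div_comm]⟩

lemma isRationalOn_prod {ι : Type*} (s : Finset ι) (f : ι → (Fin r → ℝ) → ℝ)
    (h : ∀ j ∈ s, IsRationalOn K (f j)) :
    IsRationalOn K (fun k => ∏ j ∈ s, f j k) := by
  induction s using Finset.cons_induction with
  | empty => exact ⟨1, 1, fun k hk => by simp⟩
  | cons a s ha ih =>
    have := isRationalOn_mul (h a (Finset.mem_cons_self a s))
      (ih fun j hj => h j (Finset.mem_cons_of_mem hj))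
    exact isRationalOn_congr (fun k hk => by rw [Finset.prod_cons]) this

lemma isRationalOn_zpow {g : (Fin r → ℝ) → ℝ} (hg : IsRationalOn K g)
    (hne : ∀ k ∈ K, g k ≠ 0) (z : ℤ) : IsRationalOn K (fun k => g k ^ z) := by
  obtain ⟨P, Q, h⟩ := hg
  have hP : ∀ k ∈ K, MvPolynomial.eval k P ≠ 0 := by
    intro k hk
    obtain ⟨hq, he⟩ := h k hk
    intro h0
    exact hne k hk (by rw [he, h0, zero_div])
  cases z with
  | ofNat m =>
    refine ⟨P ^ m, Q ^ m, fun k hk => ?_⟩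
    obtain ⟨hq, he⟩ := h k hk
    simp only [map_pow]
    exact ⟨pow_ne_zero _ hq, by rw [Int.ofNat_eq_coe, zpow_natCast, he, div_pow]⟩
  | negSucc m =>
    refine ⟨Q ^ (m + 1), P ^ (m + 1), fun k hk => ?_⟩
    obtain ⟨hq, he⟩ := h k hk
    simp only [map_pow]
    refine ⟨pow_ne_zero _ (hP k hk), ?_⟩
    rw [zpow_negSucc, he, div_pow, inv_div]

lemma rat_mul_int {q : ℚ} {m : ℕ} (h : q.den ∣ m) : ∃ z : ℤ, (z : ℚ) = (m : ℚ) * q := by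
  obtain ⟨t, rfl⟩ := h
  refine ⟨t * q.num, ?_⟩
  have hden : ((q.den : ℚ)) * q = q.num := by
    rw [mul_comm]
    exact_mod_cast Rat.mul_den_eq_num q
  push_cast
  rw [mul_comm (q.den : ℚ) (t:ℚ), mul_assoc, hden]

lemma prod_rpow_swap {a b : ℕ} (g : Fin a → ℝ) (hg : ∀ j, 0 < g j) (e : Fin b → Fin a → ℝ) :
    ∏ i, ∏ j, g j ^ e i j = ∏ j, g j ^ (∑ i, e i j) := by
  rw [Finset.prod_comm]
  exact Finset.prod_congr rfl fun j _ => (Real.rpow_sum_of_pos (hg j) _ _).symm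

end Helpers

/-- a monomial parametrization whose matrix M has full column rank and whose
coefficients γ are positive rational functions can be brought into the explicit form
`x = ψ(k) ⋆ ξ^A` with `AM = 0`, `rank A = n − p`, and `ψ^η` rational. -/
theorem exists_exponent_matrix_param {n r p : ℕ} (hn : 1 ≤ n) (hr : 1 ≤ r)
    (Y : Matrix (Fin n) (Fin r) ℕ) (S : Matrix (Fin n) (Fin r) ℝ)
    (hp : p < n) (M : Matrix (Fin n) (Fin p) ℤ)
    (hM : (M.map (Int.cast : ℤ → ℚ)).rank = p)
    (K : Set (Fin r → ℝ)) (hK : ∀ k ∈ K, ∀ j, 0 < k j)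
    (γ : (Fin r → ℝ) → Fin p → ℝ) (hγpos : ∀ k ∈ K, ∀ i, 0 < γ k i)
    (hγrat : ∀ i, IsRationalOn K (fun k => γ k i))
    (hparam : ∀ k x, (∀ j : Fin r, 0 < k j) → (∀ i : Fin n, 0 < x i) →
      ((k, x) ∈ Vplus Y S ↔ k ∈ K ∧ ∀ j, (∏ i, x i ^ M i j) = γ k j)) :
    ∃ (A : Matrix (Fin (n - p)) (Fin n) ℚ) (ψ : (Fin r → ℝ) → Fin n → ℝ) (η : ℕ),
      0 < η ∧ A.rank = n - p ∧ A * (M.map (Int.cast : ℤ → ℚ)) = 0 ∧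
      (∀ k ∈ K, ∀ i, 0 < ψ k i) ∧
      (∀ i, IsRationalOn K (fun k => (ψ k i) ^ η)) ∧
      (∀ k x, (∀ j : Fin r, 0 < k j) → (∀ i : Fin n, 0 < x i) →
        ((k, x) ∈ Vplus Y S ↔ k ∈ K ∧
          ∃ ξ : Fin (n - p) → ℝ, (∀ l, 0 < ξ l) ∧
            x = fun i => ψ k i * vecPow ξ A i)) := by
  classical
  set Mq : Matrix (Fin n) (Fin p) ℚ := M.map (Int.cast : ℤ → ℚ) with hMqdef
  have hMq_apply : ∀ i j, Mq i j = ((M i j : ℤ) : ℚ) := fun i j => rfl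
  -- rank of transpose
  have hrankMqT : Mqᵀ.rank = p := by rw [Matrix.rank_transpose]; exact hM
  have hrange_def : Mqᵀ.rank = Module.finrank ℚ (LinearMap.range Mqᵀ.mulVecLin) := rfl
  -- kernel dimension
  have hfinKq : Module.finrank ℚ (LinearMap.ker Mqᵀ.mulVecLin) = n - p := by
    have h1 := LinearMap.finrank_range_add_finrank_ker (Mqᵀ.mulVecLin)
    rw [Module.finrank_pi, Fintype.card_fin] at h1
    rw [← hrange_def, hrankMqT] at h1
    omega
  -- basis of the left kernel
  let bb : Module.Basis (Fin (n - p)) ℚ (LinearMap.ker Mqᵀ.mulVecLin) :=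
    Module.finBasisOfFinrankEq ℚ _ hfinKq
  set A : Matrix (Fin (n - p)) (Fin n) ℚ := Matrix.of (fun l i => (bb l : Fin n → ℚ) i)
    with hAdef
  have hA_row : ∀ l, A l = (bb l : Fin n → ℚ) := fun l => rfl
  -- A * Mq = 0
  have hAMq : A * Mq = 0 := by
    ext l j
    have hker : Mqᵀ.mulVecLin (bb l : Fin n → ℚ) = 0 := (bb l).2
    have := congrFun hker j
    simp only [Matrix.mulVecLin_apply, Matrix.mulVec, dotProduct,
      Matrix.transpose_apply, Pi.zero_apply] at this
    simp only [Matrix.mul_apply, Matrix.zero_apply, hAdef, Matrix.of_apply]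
    rw [← this]
    exact Finset.sum_congr rfl fun i _ => mul_comm _ _
  have hAMq_entry : ∀ l j, ∑ i, A l i * Mq i j = 0 := by
    intro l j
    have := congrFun (congrFun hAMq l) j
    simpa [Matrix.mul_apply] using this
  -- rows of A are linearly independent over ℚ
  have hAindep : LinearIndependent ℚ (fun l => A l) := by
    have := bb.linearIndependent.map' (LinearMap.ker Mqᵀ.mulVecLin).subtype
      (Submodule.ker_subtype _)
    exact this
  have hArank : A.rank = n - p := by
    have := hAindep.rank_matrix
    simpa using this
  -- right inverse of Mq (columns)
  have hMsurj : Function.Surjective (Mqᵀ.mulVecLin) := by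
    rw [← LinearMap.range_eq_top]
    apply Submodule.eq_top_of_finrank_eq
    rw [← hrange_def, hrankMqT, Module.finrank_pi, Fintype.card_fin]
  choose Rc hRc using fun j => hMsurj (Pi.single j 1)
  have hRinv : ∀ j j', (∑ i, Mq i j' * Rc j i) = if j' = j then 1 else 0 := by
    intro j j'
    have h2 : ∑ i, Rc j i * Mq i j' = if j' = j then 1 else 0 := by
      simpa [Matrix.mulVecLin_apply, Matrix.mulVec, Matrix.vecMul, dotProduct,
        Matrix.transpose_apply, Pi.single_apply] using congrFun (hRc j) j'
    rw [← h2]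
    exact Finset.sum_congr rfl fun i _ => mul_comm _ _
  -- right inverse of A (columns)
  have hAsurj : Function.Surjective (A.mulVecLin) := by
    rw [← LinearMap.range_eq_top]
    apply Submodule.eq_top_of_finrank_eq
    have : A.rank = Module.finrank ℚ (LinearMap.range A.mulVecLin) := rfl
    rw [← this, hArank, Module.finrank_pi, Fintype.card_fin]
  choose Cc hCc using fun l => hAsurj (Pi.single l 1)
  have hCinv : ∀ l l', (∑ i, A l' i * Cc l i) = if l' = l then 1 else 0 := by
    intro l l'
    have := congrFun (hCc l) l'
    simpa [Matrix.mulVecLin_apply, Matrix.mulVec, dotProduct,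
      Pi.single_apply] using this
  -- real versions
  set Arr : Fin (n - p) → Fin n → ℝ := fun l i => ((A l i : ℚ) : ℝ) with hArrdef
  set Mr : Matrix (Fin n) (Fin p) ℝ := Matrix.of (fun i j => ((M i j : ℤ) : ℝ)) with hMrdef
  -- rows of A are linearly independent over ℝ
  have hArrIndep : LinearIndependent ℝ Arr := by
    rw [Fintype.linearIndependent_iff]
    intro c hc l
    have hci : ∀ i, ∑ l', c l' * Arr l' i = 0 := by
      intro i
      have := congrFun hc i
      simpa [Finset.sum_apply] using this
    have key : ∀ l', ((∑ i, A l' i * Cc l i : ℚ) : ℝ) = if l' = l then 1 else 0 := by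
      intro l'
      rw [hCinv l l']
      split <;> norm_num
    calc c l = ∑ l', c l' * (if l' = l then (1:ℝ) else 0) := by simp
      _ = ∑ l', c l' * ((∑ i, A l' i * Cc l i : ℚ) : ℝ) := by
          exact Finset.sum_congr rfl fun l' _ => by rw [key l']
      _ = ∑ l', ∑ i, c l' * Arr l' i * ((Cc l i : ℚ) : ℝ) := by
          refine Finset.sum_congr rfl fun l' _ => ?_
          push_cast
          rw [Finset.mul_sum]
          exact Finset.sum_congr rfl fun i _ => by ring
      _ = ∑ i, (∑ l', c l' * Arr l' i) * ((Cc l i : ℚ) : ℝ) := by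
          rw [Finset.sum_comm]
          exact Finset.sum_congr rfl fun i _ => by rw [Finset.sum_mul]
      _ = 0 := by simp [hci]
  -- span of rows of A over ℝ equals the real left kernel of M
  have hspan_le : Submodule.span ℝ (Set.range Arr) ≤ LinearMap.ker Mrᵀ.mulVecLin := by
    rw [Submodule.span_le]
    rintro _ ⟨l, rfl⟩
    rw [SetLike.mem_coe, LinearMap.mem_ker]
    funext j
    have h0 := hAMq_entry l j
    have h0r : ((∑ i, A l i * Mq i j : ℚ) : ℝ) = 0 := by rw [h0]; norm_num
    push_cast [hMq_apply] at h0r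
    simp only [Matrix.mulVecLin_apply, Matrix.mulVec, dotProduct,
      Matrix.transpose_apply, Pi.zero_apply, hMrdef, Matrix.of_apply, hArrdef]
    rw [← h0r]
    exact Finset.sum_congr rfl fun i _ => mul_comm _ _
  have hrankMr : p ≤ Mr.rank := by
    have hfact : (Matrix.of (fun j i => ((Rc j i : ℚ) : ℝ)) : Matrix (Fin p) (Fin n) ℝ) * Mr
        = 1 := by
      ext j j'
      have h := hRinv j j'
      have h' : ((∑ i, Mq i j' * Rc j i : ℚ) : ℝ) = if j' = j then 1 else 0 := by
        rw [h]; split <;> norm_num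
      push_cast [hMq_apply] at h'
      simp only [Matrix.mul_apply, Matrix.of_apply, hMrdef, Matrix.one_apply]
      rw [show ∑ i, ((Rc j i : ℚ) : ℝ) * ((M i j' : ℤ) : ℝ)
          = ∑ i, ((M i j' : ℤ) : ℝ) * ((Rc j i : ℚ) : ℝ) from
        Finset.sum_congr rfl fun i _ => mul_comm _ _, h']
      by_cases hjj : j = j' <;> simp [hjj, eq_comm]
    calc p = (1 : Matrix (Fin p) (Fin p) ℝ).rank := by
          rw [Matrix.rank_one, Fintype.card_fin]
      _ ≤ Mr.rank := by rw [← hfact]; exact Matrix.rank_mul_le_right _ _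
  have hspan_eq : Submodule.span ℝ (Set.range Arr) = LinearMap.ker Mrᵀ.mulVecLin := by
    apply Submodule.eq_of_le_of_finrank_le hspan_le
    have h1 := LinearMap.finrank_range_add_finrank_ker (Mrᵀ.mulVecLin)
    rw [Module.finrank_pi, Fintype.card_fin] at h1
    have h2 : Mrᵀ.rank = Module.finrank ℝ (LinearMap.range Mrᵀ.mulVecLin) := rfl
    have h3 : p ≤ Mrᵀ.rank := by rw [Matrix.rank_transpose]; exact hrankMr
    have h4 : Module.finrank ℝ (Submodule.span ℝ (Set.range Arr)) = n - p := by
      rw [finrank_span_eq_card hArrIndep, Fintype.card_fin]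
    rw [h4]
    omega
  -- the common denominator
  set η : ℕ := ∏ ij : Fin p × Fin n, (Rc ij.1 ij.2).den with hηdef
  have hηpos : 0 < η := Finset.prod_pos fun ij _ => (Rc ij.1 ij.2).pos
  have hden : ∀ j i, ((Rc j i).den : ℕ) ∣ η := fun j i =>
    Finset.dvd_prod_of_mem _ (Finset.mem_univ (j, i))
  choose zz hzz using fun (j : Fin p) (i : Fin n) => rat_mul_int (hden j i)
  -- the function ψ
  set ψ : (Fin r → ℝ) → Fin n → ℝ := fun k i => ∏ j, (γ k j) ^ ((Rc j i : ℚ) : ℝ)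
    with hψdef
  have hψpos : ∀ k ∈ K, ∀ i, 0 < ψ k i := fun k hk i =>
    Finset.prod_pos fun j _ => Real.rpow_pos_of_pos (hγpos k hk j) _
  -- ψ^M = γ
  have hψM : ∀ k ∈ K, ∀ j, (∏ i, ψ k i ^ M i j) = γ k j := by
    intro k hk j
    have hγp : ∀ j', 0 < γ k j' := hγpos k hk
    have key : ∀ j', (∑ i, ((Rc j' i : ℚ) : ℝ) * ((M i j : ℤ) : ℝ))
        = if j' = j then 1 else 0 := by
      intro j'
      have h := hRinv j' j
      have h' : ((∑ i, Mq i j * Rc j' i : ℚ) : ℝ) = if j' = j then 1 else 0 := by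
        rw [h]
        by_cases hjj : j' = j
        · rw [if_pos (hjj ▸ rfl : j = j'), if_pos hjj]; norm_num
        · rw [if_neg (fun hh => hjj hh.symm), if_neg hjj]; norm_num
      push_cast [hMq_apply] at h'
      rw [show ∑ i, ((Rc j' i : ℚ) : ℝ) * ((M i j : ℤ) : ℝ)
          = ∑ i, ((M i j : ℤ) : ℝ) * ((Rc j' i : ℚ) : ℝ) from
        Finset.sum_congr rfl fun i _ => mul_comm _ _, h']
    calc ∏ i, ψ k i ^ M i j
        = ∏ i, ∏ j', (γ k j') ^ (((Rc j' i : ℚ) : ℝ) * ((M i j : ℤ) : ℝ)) := by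
          refine Finset.prod_congr rfl fun i _ => ?_
          rw [← Real.rpow_intCast (ψ k i) (M i j), hψdef]
          rw [← Real.finset_prod_rpow _ _ (fun j' _ => (Real.rpow_pos_of_pos (hγp j') _).le)]
          exact Finset.prod_congr rfl fun j' _ => by
            rw [← Real.rpow_mul (hγp j').le]
      _ = ∏ j', (γ k j') ^ (∑ i, ((Rc j' i : ℚ) : ℝ) * ((M i j : ℤ) : ℝ)) :=
          prod_rpow_swap _ hγp _
      _ = γ k j := by
          rw [Finset.prod_congr rfl fun j' _ => by rw [key j']]
          rw [Finset.prod_eq_single j (fun j' _ hj' => by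
            rw [if_neg hj', Real.rpow_zero]) (fun h => absurd (Finset.mem_univ j) h)]
          rw [if_pos rfl, Real.rpow_one]
  -- rationality of ψ^η
  have hψrat : ∀ i, IsRationalOn K (fun k => (ψ k i) ^ η) := by
    intro i
    have hrat : IsRationalOn K (fun k => ∏ j, (γ k j) ^ (zz j i)) :=
      isRationalOn_prod Finset.univ _ fun j _ =>
        isRationalOn_zpow (hγrat j) (fun k hk => (hγpos k hk j).ne') (zz j i)
    refine isRationalOn_congr (fun k hk => ?_) hrat
    have hγp : ∀ j', 0 < γ k j' := hγpos k hk
    rw [hψdef]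
    simp only
    rw [← Finset.prod_pow]
    refine Finset.prod_congr rfl fun j _ => ?_
    rw [← Real.rpow_natCast ((γ k j) ^ ((Rc j i : ℚ) : ℝ)) η,
      ← Real.rpow_mul (hγp j).le, ← Real.rpow_intCast (γ k j) (zz j i)]
    congr 1
    have := hzz j i
    have : ((zz j i : ℚ) : ℝ) = ((η : ℚ) : ℝ) * ((Rc j i : ℚ) : ℝ) := by
      rw [this]; push_cast; ring
    push_cast at this ⊢
    rw [this]; ring
  refine ⟨A, ψ, η, hηpos, hArank, hAMq, hψpos, hψrat, ?_⟩
  intro k x hk hx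
  rw [hparam k x hk hx]
  constructor
  · rintro ⟨hkK, hxM⟩
    refine ⟨hkK, ?_⟩
    set u : Fin n → ℝ := fun i => Real.log (x i) - Real.log (ψ k i) with hudef
    have hu : u ∈ LinearMap.ker Mrᵀ.mulVecLin := by
      rw [LinearMap.mem_ker]
      funext j
      have e1 : ∑ i, ((M i j : ℤ) : ℝ) * Real.log (x i) = Real.log (γ k j) := by
        rw [← hxM j, Real.log_prod (fun i _ => (zpow_pos (hx i) _).ne')]
        exact Finset.sum_congr rfl fun i _ => (Real.log_zpow _ _).symm
      have e2 : ∑ i, ((M i j : ℤ) : ℝ) * Real.log (ψ k i) = Real.log (γ k j) := by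
        rw [← hψM k hkK j, Real.log_prod (fun i _ => (zpow_pos (hψpos k hkK i) _).ne')]
        exact Finset.sum_congr rfl fun i _ => (Real.log_zpow _ _).symm
      simp only [Matrix.mulVecLin_apply, Matrix.mulVec, dotProduct,
        Matrix.transpose_apply, Pi.zero_apply, hMrdef, Matrix.of_apply, hudef, mul_sub]
      rw [Finset.sum_sub_distrib, e1, e2, sub_self]
    have husp : u ∈ Submodule.span ℝ (Set.range Arr) := hspan_eq ▸ hu
    obtain ⟨c, hc⟩ := (Submodule.mem_span_range_iff_exists_fun ℝ).mp husp
    refine ⟨fun l => Real.exp (c l), fun l => Real.exp_pos _, ?_⟩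
    funext i
    have hui : ∑ l, c l * Arr l i = u i := by
      have := congrFun hc i
      simpa [Finset.sum_apply] using this
    have hvp : vecPow (fun l => Real.exp (c l)) A i = Real.exp (u i) := by
      rw [vecPow, ← hui, Real.exp_sum]
      exact Finset.prod_congr rfl fun l _ => (Real.exp_mul _ _).symm
    rw [hvp, hudef]
    simp only
    rw [Real.exp_sub, Real.exp_log (hx i), Real.exp_log (hψpos k hkK i)]
    rw [mul_comm, div_mul_cancel₀ _ (hψpos k hkK i).ne']
  · rintro ⟨hkK, ξ, hξpos, rfl⟩
    refine ⟨hkK, fun j => ?_⟩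
    have h2 : ∏ i, (vecPow ξ A i) ^ M i j = 1 := by
      calc ∏ i, (vecPow ξ A i) ^ M i j
          = ∏ i, ∏ l, (ξ l) ^ (((A l i : ℚ) : ℝ) * ((M i j : ℤ) : ℝ)) := by
            refine Finset.prod_congr rfl fun i _ => ?_
            rw [← Real.rpow_intCast (vecPow ξ A i) (M i j), vecPow]
            rw [← Real.finset_prod_rpow _ _ (fun l _ => (Real.rpow_pos_of_pos (hξpos l) _).le)]
            exact Finset.prod_congr rfl fun l _ => by rw [← Real.rpow_mul (hξpos l).le]
        _ = ∏ l, (ξ l) ^ (∑ i, ((A l i : ℚ) : ℝ) * ((M i j : ℤ) : ℝ)) :=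
            prod_rpow_swap _ hξpos _
        _ = 1 := by
            refine Finset.prod_eq_one fun l _ => ?_
            have h0 := hAMq_entry l j
            have h0r : ((∑ i, A l i * Mq i j : ℚ) : ℝ) = 0 := by rw [h0]; norm_num
            push_cast [hMq_apply] at h0r
            rw [h0r, Real.rpow_zero]
    calc ∏ i, (ψ k i * vecPow ξ A i) ^ M i j
        = (∏ i, ψ k i ^ M i j) * ∏ i, (vecPow ξ A i) ^ M i j := by
          rw [← Finset.prod_mul_distrib]
          exact Finset.prod_congr rfl fun i _ => mul_zpow _ _ _
      _ = γ k j := by rw [hψM k hkK j, h2, mul_one]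
end
end

section
/- Assume V⁺ admits a monomial parametrization with exponent matrix A (data p, A, K, ψ) and that the cone generator matrix E has no zero row. Then the following are equivalent: (i) the network admits multistationarity; (ii) there exist x ∈ ℝ_{>0}^n and ξ ∈ ℝ_{>0}^{n−p} with ξ ≠ 𝟙 such that Z(x − x⋆ξ^A) = 0; (iii) there exist x ∈ ℝ_{>0}^n and κ ∈ ℝ^{n−p} with κ ≠ 0 such that Z(x − x⋆(e^κ)^A) = 0, where e^κ is taken componentwise. -/
open Matrix

noncomputable section

/-!
Two steady states with the same rate constants differ by a monomial factor: by the
parametrization, `b = a ⋆ ξ^A` for some positive `ξ`, and conversely `a ⋆ ξ^A` is again a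
steady state for the same `k`. Since `E` has no zero row, `E𝟙` is a positive vector of
`ker S`, so every positive `x` is a steady state, for `k = E𝟙 / φ(x)`. As `A` has full row
rank, `ξ^A = 𝟙` forces `ξ = 𝟙`, so `ξ ≠ 𝟙` makes the two steady states `x` and `x ⋆ ξ^A`
distinct. Finally `κ ↦ e^κ` maps the nonzero vectors onto the positive vectors other than `𝟙`.
-/

lemma Matrix.exists_mul_eq_one_of_rank_eq {K m n : Type*} [Field K] [Fintype m]
    [DecidableEq m] [Fintype n] (B : Matrix m n K) (hB : B.rank = Fintype.card m) :
    ∃ C : Matrix n m K, B * C = 1 := by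
  refine mulVec_surjective_iff_exists_right_inverse.mp ?_
  rw [← coe_mulVecLin, ← LinearMap.range_eq_top]
  exact Submodule.eq_top_of_finrank_eq <| by
    rw [← Matrix.rank, hB, Module.finrank_fintype_fun_eq_card]

lemma Matrix.eq_zero_of_vecMul_map_ratCast_eq_zero {m n : Type*} [Fintype m] [DecidableEq m]
    [Fintype n] {B : Matrix m n ℚ} (hB : B.rank = Fintype.card m) {u : m → ℝ}
    (hu : u ᵥ* B.map (Rat.cast : ℚ → ℝ) = 0) : u = 0 := by
  obtain ⟨C, hC⟩ := B.exists_mul_eq_one_of_rank_eq hB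
  have hC' : B.map (Rat.castHom ℝ) * C.map (Rat.castHom ℝ) = 1 := by
    rw [← Matrix.map_mul, hC, Matrix.map_one _ (map_zero _) (map_one _)]
  calc u = u ᵥ* (B.map (Rat.castHom ℝ) * C.map (Rat.castHom ℝ)) := by rw [hC', vecMul_one]
    _ = 0 := by rw [← vecMul_vecMul]; exact (congrArg (· ᵥ* _) hu).trans (zero_vecMul _)

lemma vecPow_mul {q m : ℕ} {ξ η : Fin q → ℝ} (hξ : ∀ l, 0 < ξ l) (hη : ∀ l, 0 < η l)
    (B : Matrix (Fin q) (Fin m) ℚ) (j : Fin m) :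
    vecPow (fun l => ξ l * η l) B j = vecPow ξ B j * vecPow η B j := by
  simp only [vecPow, ← Finset.prod_mul_distrib]
  exact Finset.prod_congr rfl fun i _ => Real.mul_rpow (hξ i).le (hη i).le

lemma vecPow_one {q m : ℕ} (B : Matrix (Fin q) (Fin m) ℚ) :
    vecPow (fun _ => 1) B = fun _ => 1 :=
  funext fun _ => by simp [vecPow]

lemma vecPow_exp {q m : ℕ} (κ : Fin q → ℝ) (B : Matrix (Fin q) (Fin m) ℚ) (j : Fin m) :
    vecPow (fun l => Real.exp (κ l)) B j = Real.exp ((κ ᵥ* B.map (Rat.cast : ℚ → ℝ)) j) := by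
  simp [vecPow, vecMul, dotProduct, Real.exp_sum, Real.exp_mul]

lemma exists_vecPow_ne_one {q m : ℕ} {B : Matrix (Fin q) (Fin m) ℚ} (hB : B.rank = q)
    {ξ : Fin q → ℝ} (hξ : ∀ l, 0 < ξ l) (hξ1 : ξ ≠ fun _ => 1) : ∃ j, vecPow ξ B j ≠ 1 := by
  obtain ⟨κ, rfl⟩ : ∃ κ : Fin q → ℝ, (fun l => Real.exp (κ l)) = ξ :=
    ⟨_, funext fun l => Real.exp_log (hξ l)⟩
  by_contra! h
  have hκ : κ = 0 := by
    refine Matrix.eq_zero_of_vecMul_map_ratCast_eq_zero (by rw [hB, Fintype.card_fin]) ?_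
    exact funext fun j => by simpa [vecPow_exp] using h j
  exact hξ1 (by simp [hκ])

lemma exists_pos_ne_one_iff_exists_ne_zero_exp {ι : Type*} (P : (ι → ℝ) → Prop) :
    (∃ ξ : ι → ℝ, (∀ l, 0 < ξ l) ∧ ξ ≠ (fun _ => 1) ∧ P ξ) ↔
      ∃ κ : ι → ℝ, κ ≠ 0 ∧ P (fun l => Real.exp (κ l)) := by
  constructor
  · rintro ⟨ξ, hξ, hξ1, hP⟩
    obtain ⟨κ, rfl⟩ : ∃ κ : ι → ℝ, (fun l => Real.exp (κ l)) = ξ :=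
      ⟨_, funext fun l => Real.exp_log (hξ l)⟩
    exact ⟨κ, fun hκ => hξ1 (by simp [hκ]), hP⟩
  · rintro ⟨κ, hκ, hP⟩
    refine ⟨_, fun l => Real.exp_pos (κ l), fun h1 => hκ (funext fun l => ?_), hP⟩
    simpa using congrFun h1 l

lemma exists_mem_Vplus {n r : ℕ} (Y : Matrix (Fin n) (Fin r) ℕ) {S : Matrix (Fin n) (Fin r) ℝ}
    {v : Fin r → ℝ} (hSv : S *ᵥ v = 0) (hv : ∀ j, 0 < v j) {x : Fin n → ℝ}
    (hx : ∀ i, 0 < x i) : ∃ k, (k, x) ∈ Vplus Y S := by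
  refine ⟨fun j => v j / phi Y x j, fun j => div_pos (hv j) (phi_pos Y hx j), hx, ?_⟩
  convert hSv using 2
  exact funext fun j => div_mul_cancel₀ _ (phi_pos Y hx j).ne'

lemma IsConeGenMatrix.exists_pos_mem_ker {n r d : ℕ} {S : Matrix (Fin n) (Fin r) ℝ}
    {E : Matrix (Fin r) (Fin d) ℝ} (hE : IsConeGenMatrix S E) (hrow : ∀ j, ∃ l, E j l ≠ 0) :
    ∃ v, S *ᵥ v = 0 ∧ ∀ j, 0 < v j := by
  have hmem : E *ᵥ (fun _ => 1) ∈ {v : Fin r → ℝ | S *ᵥ v = 0 ∧ ∀ j, 0 ≤ v j} := by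
    rw [hE.2]; exact ⟨fun _ => 1, fun _ => zero_le_one, rfl⟩
  refine ⟨_, hmem.1, fun j => ?_⟩
  obtain ⟨l, hl⟩ := hrow j
  simpa [mulVec, dotProduct] using
    Finset.sum_pos' (fun i _ => hE.1 j i) ⟨l, Finset.mem_univ l, (hE.1 j l).lt_of_ne' hl⟩

namespace IsMonomialParamExp

variable {n r p : ℕ} {Y : Matrix (Fin n) (Fin r) ℕ} {S : Matrix (Fin n) (Fin r) ℝ}
  {A : Matrix (Fin (n - p)) (Fin n) ℚ} {K : Set (Fin r → ℝ)} {ψ : (Fin r → ℝ) → (Fin n → ℝ)}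
  {k : Fin r → ℝ} {a b : Fin n → ℝ}

lemma exists_eq_mul_vecPow (h : IsMonomialParamExp Y S p A K ψ) (ha : (k, a) ∈ Vplus Y S)
    (hb : (k, b) ∈ Vplus Y S) :
    ∃ ξ : Fin (n - p) → ℝ, (∀ l, 0 < ξ l) ∧ b = fun i => a i * vecPow ξ A i := by
  obtain ⟨-, ξa, hξa, rfl⟩ := (h.2.2.2.2 k a ha.1 ha.2.1).mp ha
  obtain ⟨-, ξb, hξb, rfl⟩ := (h.2.2.2.2 k b hb.1 hb.2.1).mp hb
  have hξ : ∀ l, 0 < ξb l / ξa l := fun l => div_pos (hξb l) (hξa l)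
  refine ⟨_, hξ, funext fun i => ?_⟩
  rw [mul_assoc, ← vecPow_mul hξa hξ]
  simp only [mul_div_cancel₀ _ (hξa _).ne']

lemma mul_vecPow_mem (h : IsMonomialParamExp Y S p A K ψ) (ha : (k, a) ∈ Vplus Y S)
    {ξ : Fin (n - p) → ℝ} (hξ : ∀ l, 0 < ξ l) :
    (k, fun i => a i * vecPow ξ A i) ∈ Vplus Y S := by
  have hpos : ∀ i, 0 < a i * vecPow ξ A i := fun i => mul_pos (ha.2.1 i) (vecPow_pos hξ A i)
  obtain ⟨hkK, ξa, hξa, rfl⟩ := (h.2.2.2.2 k a ha.1 ha.2.1).mp ha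
  refine (h.2.2.2.2 k _ ha.1 hpos).mpr
    ⟨hkK, _, fun l => mul_pos (hξa l) (hξ l), funext fun i => ?_⟩
  rw [vecPow_mul hξa hξ, mul_assoc]

end IsMonomialParamExp

theorem multistationarity_iff_xi_kernel_general {n r d s p : ℕ}
    (Y : Matrix (Fin n) (Fin r) ℕ) (S : Matrix (Fin n) (Fin r) ℝ)
    (A : Matrix (Fin (n - p)) (Fin n) ℚ) (K : Set (Fin r → ℝ))
    (ψ : (Fin r → ℝ) → (Fin n → ℝ)) (hparam : IsMonomialParamExp Y S p A K ψ)
    (E : Matrix (Fin r) (Fin d) ℝ) (hE : IsConeGenMatrix S E)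
    (hrow : ∀ j, ∃ l, E j l ≠ 0)
    (Z : Matrix (Fin (n - s)) (Fin n) ℝ) :
    ((∃ k : Fin r → ℝ, (∀ j, 0 < k j) ∧ ∃ a b : Fin n → ℝ, a ≠ b ∧
        (k, a) ∈ Vplus Y S ∧ (k, b) ∈ Vplus Y S ∧ Z.mulVec a = Z.mulVec b) ↔
      (∃ x : Fin n → ℝ, (∀ i, 0 < x i) ∧ ∃ ξ : Fin (n - p) → ℝ, (∀ l, 0 < ξ l) ∧
        ξ ≠ (fun _ => 1) ∧ Z.mulVec (fun i => x i - x i * vecPow ξ A i) = 0)) ∧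
    ((∃ x : Fin n → ℝ, (∀ i, 0 < x i) ∧ ∃ ξ : Fin (n - p) → ℝ, (∀ l, 0 < ξ l) ∧
        ξ ≠ (fun _ => 1) ∧ Z.mulVec (fun i => x i - x i * vecPow ξ A i) = 0) ↔
      (∃ x : Fin n → ℝ, (∀ i, 0 < x i) ∧ ∃ κ : Fin (n - p) → ℝ, κ ≠ 0 ∧
        Z.mulVec (fun i =>
          x i - x i * vecPow (fun l => Real.exp (κ l)) A i) = 0)) := by
  refine ⟨⟨?_, ?_⟩, exists_congr fun x => and_congr_right fun _ =>
    exists_pos_ne_one_iff_exists_ne_zero_exp _⟩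
  · rintro ⟨k, -, a, b, hab, ha, hb, hZab⟩
    obtain ⟨ξ, hξ, rfl⟩ := hparam.exists_eq_mul_vecPow ha hb
    refine ⟨a, ha.2.1, ξ, hξ, fun hξ1 => hab ?_, ?_⟩
    · simp [hξ1, vecPow_one]
    · exact (mulVec_sub Z _ _).trans (sub_eq_zero.mpr hZab)
  · rintro ⟨x, hx, ξ, hξ, hξ1, hZ0⟩
    obtain ⟨v, hSv, hv⟩ := hE.exists_pos_mem_ker hrow
    obtain ⟨k, hk⟩ := exists_mem_Vplus Y hSv hv hx
    obtain ⟨i, hi⟩ := exists_vecPow_ne_one hparam.2.1 hξ hξ1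
    refine ⟨k, hk.1, x, _, fun hxb => hi ?_, hk, hparam.mul_vecPow_mem hk hξ, ?_⟩
    · simpa [(hx i).ne'] using congrFun hxb i
    · exact sub_eq_zero.mp ((mulVec_sub Z _ _).symm.trans hZ0)

/-- characterization of multistationarity via the exponent matrix,
independent of the rate constants. -/
theorem multistationarity_iff_xi_kernel {n r d s p : ℕ} (hn : 1 ≤ n) (hr : 1 ≤ r)
    (Y : Matrix (Fin n) (Fin r) ℕ) (S : Matrix (Fin n) (Fin r) ℝ)
    (A : Matrix (Fin (n - p)) (Fin n) ℚ) (K : Set (Fin r → ℝ))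
    (ψ : (Fin r → ℝ) → (Fin n → ℝ)) (hparam : IsMonomialParamExp Y S p A K ψ)
    (E : Matrix (Fin r) (Fin d) ℝ) (hE : IsConeGenMatrix S E)
    (hrow : ∀ j, ∃ l, E j l ≠ 0)
    (Z : Matrix (Fin (n - s)) (Fin n) ℝ) (hZ : IsConservationMatrix S s Z) :
    ((∃ k : Fin r → ℝ, (∀ j, 0 < k j) ∧ ∃ a b : Fin n → ℝ, a ≠ b ∧
        (k, a) ∈ Vplus Y S ∧ (k, b) ∈ Vplus Y S ∧ Z.mulVec a = Z.mulVec b) ↔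
      (∃ x : Fin n → ℝ, (∀ i, 0 < x i) ∧ ∃ ξ : Fin (n - p) → ℝ, (∀ l, 0 < ξ l) ∧
        ξ ≠ (fun _ => 1) ∧ Z.mulVec (fun i => x i - x i * vecPow ξ A i) = 0)) ∧
    ((∃ x : Fin n → ℝ, (∀ i, 0 < x i) ∧ ∃ ξ : Fin (n - p) → ℝ, (∀ l, 0 < ξ l) ∧
        ξ ≠ (fun _ => 1) ∧ Z.mulVec (fun i => x i - x i * vecPow ξ A i) = 0) ↔
      (∃ x : Fin n → ℝ, (∀ i, 0 < x i) ∧ ∃ κ : Fin (n - p) → ℝ, κ ≠ 0 ∧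
        Z.mulVec (fun i =>
          x i - x i * vecPow (fun l => Real.exp (κ l)) A i) = 0)) :=
  multistationarity_iff_xi_kernel_general Y S A K ψ hparam E hE hrow Z
end
end
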